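/- Under the stated setup, let e ∉ A ∪ R with Δ^B_e ≥ Δ, and let M̃_e be a maximizer of MinW(·, ŵ) over {M ∈ 𝓜_R : e ∉ M} if e ∈ M_t, and over {M ∈ 𝓜_R : e ∈ M} if e ∉ M_t, assuming the respective collection is nonempty. Then MinW(M_t, ŵ) − MinW(M̃_e, ŵ) > (3/4)·Δ. -/

import Mathlib

/-!
The estimate `ŵ` can only overestimate on `A ⊆ M*` and is `Δ/8`-accurate off `A ∪ R`. Hence
`MinW(M_t, ŵ) ≥ MinW(M*, ŵ) ≥ OPT − Δ/8`, while every `M ∈ 𝓜_R` with `MinW(M, w) ≤ OPT − Δ`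
has its `w`-bottleneck outside `A`, so `MinW(M, ŵ) < OPT − 7Δ/8`. The first bound forbids such a
gap for `M_t`, which forces `e ∈ M_t ↔ e ∈ M*`; then the gap assumption applies to `M̃_e`, and the
two bounds differ by more than `3Δ/4`.
-/

/-- The bottleneck value of a super arm `M` under weights `v`:
`MinW (M, v) = min_{e ∈ M} v e` (defaulting to `0` on the empty set). -/
noncomputable def MinW {α : Type*} (M : Finset α) (v : α → ℝ) : ℝ :=
  if h : M.Nonempty then M.inf' h v else 0

open Finset

section MinW

variable {α : Type*} {M : Finset α}

lemma MinW_le {i : α} (hi : i ∈ M) (v : α → ℝ) : MinW M v ≤ v i := by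
  rw [MinW, dif_pos ⟨i, hi⟩]
  exact inf'_le v hi

lemma exists_mem_eq_MinW (hM : M.Nonempty) (v : α → ℝ) : ∃ i ∈ M, MinW M v = v i := by
  rw [MinW, dif_pos hM]
  exact exists_mem_eq_inf' hM v

lemma MinW_le_MinW_add (hM : M.Nonempty) {u v : α → ℝ} {ε : ℝ}
    (hvu : ∀ i ∈ M, v i ≤ u i + ε) : MinW M v ≤ MinW M u + ε := by
  obtain ⟨j, hj, hju⟩ := exists_mem_eq_MinW hM u
  calc MinW M v ≤ v j := MinW_le hj v
    _ ≤ u j + ε := hvu j hj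
    _ = MinW M u + ε := by rw [hju]

end MinW

section Estimate

variable {α : Type*} [DecidableEq α] {A R M : Finset α} {w what : α → ℝ} {ε : ℝ}

lemma MinW_le_MinW_add_of_estimate (hε : 0 ≤ ε)
    (hw1 : ∀ i, i ∉ A ∪ R → |what i - w i| < ε) (hw2 : ∀ i ∈ A, w i ≤ what i)
    (hM : M.Nonempty) (hMR : M ∩ R = ∅) : MinW M w ≤ MinW M what + ε := by
  refine MinW_le_MinW_add hM fun i hi => ?_
  by_cases hiA : i ∈ A
  · linarith [hw2 i hiA]
  · have hiR := (disjoint_iff_inter_eq_empty.mpr hMR).notMem_of_mem_left_finset hi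
    linarith [(abs_lt.mp (hw1 i (by simp [hiA, hiR]))).1]

lemma MinW_lt_MinW_add_of_estimate {c : ℝ}
    (hw1 : ∀ i, i ∉ A ∪ R → |what i - w i| < ε) (hA : ∀ i ∈ A, c ≤ w i)
    (hM : M.Nonempty) (hMR : M ∩ R = ∅) (hlt : MinW M w < c) :
    MinW M what < MinW M w + ε := by
  obtain ⟨j, hj, hjw⟩ := exists_mem_eq_MinW hM w
  have hjA : j ∉ A := fun hjA => by linarith [hA j hjA]
  have hjR := (disjoint_iff_inter_eq_empty.mpr hMR).notMem_of_mem_left_finset hj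
  linarith [MinW_le hj what, (abs_lt.mp (hw1 j (by simp [hjA, hjR]))).2]

end Estimate

theorem stmt_8_general {α : Type*} [DecidableEq α]
    (𝓜 : Finset (Finset α)) (h𝓜 : ∀ M ∈ 𝓜, M.Nonempty)
    (w : α → ℝ) (Mstar : Finset α) (hstar : Mstar ∈ 𝓜)
    (A R : Finset α) (hA : A ⊆ Mstar) (hR : R ∩ Mstar = ∅)
    (Δ : ℝ) (hΔ : 0 < Δ) (what : α → ℝ)
    (hw1 : ∀ i, i ∉ A ∪ R → |what i - w i| < Δ / 8)
    (hw2 : ∀ i ∈ A, w i ≤ what i)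
    (Mt : Finset α) (hMt1 : Mt ∈ 𝓜) (hMt2 : Mt ∩ R = ∅)
    (hMtmax : ∀ M ∈ 𝓜, M ∩ R = ∅ → MinW M what ≤ MinW Mt what)
    (e : α)
    -- `Δ^B_e ≥ Δ` (together with nonemptiness of the collection defining `Δ^B_e`)
    (hgap1 : e ∈ Mstar →
      (∃ M ∈ 𝓜, e ∉ M) ∧ ∀ M ∈ 𝓜, e ∉ M → MinW M w + Δ ≤ MinW Mstar w)
    (hgap2 : e ∉ Mstar →
      (∃ M ∈ 𝓜, e ∈ M) ∧ ∀ M ∈ 𝓜, e ∈ M → MinW M w + Δ ≤ MinW Mstar w)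
    -- `M̃_e` is a maximizer of `MinW (·, ŵ)` over the constrained collection
    (Mte : Finset α) (hMte1 : Mte ∈ 𝓜) (hMte2 : Mte ∩ R = ∅)
    (hMte3 : if e ∈ Mt then e ∉ Mte else e ∈ Mte) :
    MinW Mt what - MinW Mte what > 3 / 4 * Δ := by
  have hMstarR : Mstar ∩ R = ∅ := by rwa [inter_comm]
  have hopt : MinW Mstar w ≤ MinW Mt what + Δ / 8 := by
    linarith [MinW_le_MinW_add_of_estimate (by positivity) hw1 hw2 (h𝓜 _ hstar) hMstarR,
      hMtmax Mstar hstar hMstarR]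
  have hgap : ∀ M ∈ 𝓜, M ∩ R = ∅ → MinW M w + Δ ≤ MinW Mstar w →
      MinW M what < MinW Mstar w - 7 / 8 * Δ := fun M hM hMR hMgap => by
    linarith [MinW_lt_MinW_add_of_estimate hw1 (fun i hi => MinW_le (hA hi) w) (h𝓜 M hM) hMR
      (by linarith : MinW M w < MinW Mstar w)]
  have hMt : e ∈ Mt ↔ e ∈ Mstar := by
    constructor
    · intro heMt
      by_contra heMstar
      linarith [hgap Mt hMt1 hMt2 ((hgap2 heMstar).2 Mt hMt1 heMt)]
    · intro heMstar
      by_contra heMt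
      linarith [hgap Mt hMt1 hMt2 ((hgap1 heMstar).2 Mt hMt1 heMt)]
  have hMte : MinW Mte w + Δ ≤ MinW Mstar w := by
    split_ifs at hMte3 with heMt
    · exact (hgap1 (hMt.1 heMt)).2 Mte hMte1 hMte3
    · exact (hgap2 (mt hMt.2 heMt)).2 Mte hMte1 hMte3
  linarith [hgap Mte hMte1 hMte2 hMte]

theorem stmt_8 {α : Type*} [Fintype α] [DecidableEq α]
    (𝓜 : Finset (Finset α)) (h𝓜 : ∀ M ∈ 𝓜, M.Nonempty)
    (w : α → ℝ) (Mstar : Finset α) (hstar : Mstar ∈ 𝓜)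
    (hunique : ∀ M ∈ 𝓜, M ≠ Mstar → MinW M w < MinW Mstar w)
    (A R : Finset α) (hA : A ⊆ Mstar) (hR : R ∩ Mstar = ∅)
    (Δ : ℝ) (hΔ : 0 < Δ) (what : α → ℝ)
    (hw1 : ∀ i, i ∉ A ∪ R → |what i - w i| < Δ / 8)
    (hw2 : ∀ i ∈ A, w i ≤ what i)
    (Mt : Finset α) (hMt1 : Mt ∈ 𝓜) (hMt2 : Mt ∩ R = ∅)
    (hMtmax : ∀ M ∈ 𝓜, M ∩ R = ∅ → MinW M what ≤ MinW Mt what)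
    (e : α) (he : e ∉ A ∪ R)
    -- `Δ^B_e ≥ Δ` (together with nonemptiness of the collection defining `Δ^B_e`)
    (hgap1 : e ∈ Mstar →
      (∃ M ∈ 𝓜, e ∉ M) ∧ ∀ M ∈ 𝓜, e ∉ M → MinW M w + Δ ≤ MinW Mstar w)
    (hgap2 : e ∉ Mstar →
      (∃ M ∈ 𝓜, e ∈ M) ∧ ∀ M ∈ 𝓜, e ∈ M → MinW M w + Δ ≤ MinW Mstar w)
    -- `M̃_e` is a maximizer of `MinW (·, ŵ)` over the constrained collection
    (Mte : Finset α) (hMte1 : Mte ∈ 𝓜) (hMte2 : Mte ∩ R = ∅)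
    (hMte3 : if e ∈ Mt then e ∉ Mte else e ∈ Mte)
    (hMtemax : ∀ M ∈ 𝓜, M ∩ R = ∅ → (if e ∈ Mt then e ∉ M else e ∈ M) →
      MinW M what ≤ MinW Mte what) :
    MinW Mt what - MinW Mte what > 3 / 4 * Δ :=
  stmt_8_general 𝓜 h𝓜 w Mstar hstar A R hA hR Δ hΔ what hw1 hw2 Mt hMt1 hMt2 hMtmax e hgap1 hgap2
    Mte hMte1 hMte2 hMte3
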